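/- Let n ≥ 2 be an integer, K, H ∈ ℝ, T > 0, and suppose φ_{K,H}(r) = s_K'(r) − H·s_K(r) is strictly positive on [0,T]. If u : [0,T] → ℝ is differentiable with u(0) ≥ (n−1)H and u'(r) ≥ u(r)²/(n−1) + (n−1)K for all r ∈ [0,T], then u(r) ≥ −(n−1)·φ_{K,H}'(r)/φ_{K,H}(r) for all r ∈ [0,T]. -/

import Mathlib

/-- The model function `s_K`: solution of `s'' + K s = 0` with `s(0)=0`, `s'(0)=1`. -/
noncomputable def sK (K : ℝ) : ℝ → ℝ := fun r =>
  if 0 < K then Real.sin (r * Real.sqrt K) / Real.sqrt K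
  else if K = 0 then r
  else Real.sinh (r * Real.sqrt |K|) / Real.sqrt |K|

/-- `φ_{K,H}(r) = s_K'(r) − H·s_K(r)`. -/
noncomputable def phiKH (K H : ℝ) : ℝ → ℝ := fun r => deriv (sK K) r - H * sK K r

/-- Auxiliary: the derivative of `sK`. -/
noncomputable def cKaux (K : ℝ) : ℝ → ℝ := fun r =>
  if 0 < K then Real.cos (r * Real.sqrt K)
  else if K = 0 then 1
  else Real.cosh (r * Real.sqrt |K|)

lemma sK_hasDerivAt (K r : ℝ) : HasDerivAt (sK K) (cKaux K r) r := by
  unfold sK cKaux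
  split_ifs with h1 h2
  · have hs : (0:ℝ) < Real.sqrt K := Real.sqrt_pos.mpr h1
    have h := ((hasDerivAt_mul_const (Real.sqrt K)).sin (x := r)).div_const (Real.sqrt K)
    refine h.congr_deriv ?_
    field_simp
  · exact hasDerivAt_id' r
  · have hK : 0 < |K| := abs_pos.mpr (by intro h; exact h2 h)
    have hs : (0:ℝ) < Real.sqrt |K| := Real.sqrt_pos.mpr hK
    have h := ((hasDerivAt_mul_const (Real.sqrt |K|)).sinh (x := r)).div_const (Real.sqrt |K|)
    refine h.congr_deriv ?_
    field_simp

lemma cK_hasDerivAt (K r : ℝ) : HasDerivAt (cKaux K) (-K * sK K r) r := by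
  unfold sK cKaux
  split_ifs with h1 h2
  · have hs : (0:ℝ) < Real.sqrt K := Real.sqrt_pos.mpr h1
    have hss : Real.sqrt K * Real.sqrt K = K := Real.mul_self_sqrt h1.le
    have h := (hasDerivAt_mul_const (Real.sqrt K)).cos (x := r)
    refine h.congr_deriv ?_
    symm
    field_simp
    linear_combination (Real.sin (r * Real.sqrt K)) * hss
  · refine (hasDerivAt_const r (1:ℝ)).congr_deriv ?_
    rw [h2]; ring
  · have hK : 0 < |K| := abs_pos.mpr (by intro h; exact h2 h)
    have hs : (0:ℝ) < Real.sqrt |K| := Real.sqrt_pos.mpr hK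
    have hss : Real.sqrt |K| * Real.sqrt |K| = |K| := Real.mul_self_sqrt hK.le
    have habs : |K| = -K := abs_of_neg (lt_of_le_of_ne (not_lt.mp h1) h2)
    have h := (hasDerivAt_mul_const (Real.sqrt |K|)).cosh (x := r)
    refine h.congr_deriv ?_
    symm
    field_simp
    linear_combination (-Real.sinh (r * Real.sqrt |K|)) * (hss.trans habs)

lemma deriv_sK (K : ℝ) : deriv (sK K) = cKaux K :=
  funext fun r => (sK_hasDerivAt K r).deriv

lemma phiKH_eq (K H : ℝ) : phiKH K H = fun r => cKaux K r - H * sK K r := by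
  funext r; simp [phiKH, deriv_sK]

lemma phiKH_hasDerivAt (K H r : ℝ) :
    HasDerivAt (phiKH K H) (-K * sK K r - H * cKaux K r) r := by
  rw [phiKH_eq]
  exact (cK_hasDerivAt K r).sub ((sK_hasDerivAt K r).const_mul H)

lemma deriv_phiKH (K H r : ℝ) :
    deriv (phiKH K H) r = -K * sK K r - H * cKaux K r :=
  (phiKH_hasDerivAt K H r).deriv

lemma sK_zero (K : ℝ) : sK K 0 = 0 := by
  unfold sK; split_ifs <;> simp

lemma cK_zero (K : ℝ) : cKaux K 0 = 1 := by
  unfold cKaux; split_ifs <;> simp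

lemma phiKH_deriv2 (K H r : ℝ) :
    HasDerivAt (fun r => -K * sK K r - H * cKaux K r) (-K * phiKH K H r) r := by
  have h := ((sK_hasDerivAt K r).const_mul (-K)).sub ((cK_hasDerivAt K r).const_mul H)
  refine h.congr_deriv ?_
  rw [phiKH_eq]
  ring

/-- scalar Riccati comparison. If `φ_{K,H} > 0` on `[0,T]` and `u` is
differentiable with `u(0) ≥ (n−1)H` and `u' ≥ u²/(n−1) + (n−1)K` on `[0,T]`, then
`u ≥ −(n−1)·φ_{K,H}'/φ_{K,H}` on `[0,T]`. -/
theorem riccati_comparison (n : ℕ) (hn : 2 ≤ n) (K H T : ℝ) (hT : 0 < T)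
    (hphi : ∀ r ∈ Set.Icc 0 T, 0 < phiKH K H r)
    (u u' : ℝ → ℝ)
    (hu : ∀ r ∈ Set.Icc 0 T, HasDerivWithinAt u (u' r) (Set.Icc 0 T) r)
    (hu0 : ((n : ℝ) - 1) * H ≤ u 0)
    (hineq : ∀ r ∈ Set.Icc 0 T, (u r) ^ 2 / ((n : ℝ) - 1) + ((n : ℝ) - 1) * K ≤ u' r) :
    ∀ r ∈ Set.Icc 0 T, -((n : ℝ) - 1) * deriv (phiKH K H) r / phiKH K H r ≤ u r := by
  set m : ℝ := (n : ℝ) - 1 with hm_def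
  have hm : (0:ℝ) < m := by
    have : (2:ℝ) ≤ (n:ℝ) := by exact_mod_cast hn
    simp only [hm_def]; linarith
  -- the function W = u φ + m φ'
  set W : ℝ → ℝ := fun r => u r * phiKH K H r + m * (-K * sK K r - H * cKaux K r) with hW_def
  set W' : ℝ → ℝ := fun r =>
    u' r * phiKH K H r + u r * (-K * sK K r - H * cKaux K r) + m * (-K * phiKH K H r)
    with hW'_def
  have hW : ∀ r ∈ Set.Icc 0 T, HasDerivWithinAt W (W' r) (Set.Icc 0 T) r := by
    intro r hr
    exact ((hu r hr).mul (phiKH_hasDerivAt K H r).hasDerivWithinAt).add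
      (((phiKH_deriv2 K H r).hasDerivWithinAt).const_mul m)
  have hW0 : 0 ≤ W 0 := by
    have h0 : phiKH K H 0 = 1 := by rw [phiKH_eq]; simp [sK_zero, cK_zero]
    simp only [hW_def, h0, sK_zero, cK_zero]
    linarith [hu0]
  -- continuity of u on the interval
  have hucont : ContinuousOn u (Set.Icc 0 T) := fun r hr => (hu r hr).continuousWithinAt
  -- continuous extension of u/m to all of ℝ
  set c : ℝ → ℝ := (fun x => x / m) ∘ u ∘ (fun r => max 0 (min r T)) with hc_def
  have hproj : ∀ x : ℝ, max 0 (min x T) ∈ Set.Icc 0 T := by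
    intro x
    exact ⟨le_max_left _ _, max_le hT.le (min_le_right _ _)⟩
  have hc : Continuous c := by
    apply (continuous_id.div_const m).comp
    exact hucont.comp_continuous
      (continuous_const.max (continuous_id.min continuous_const)) hproj
  have hceq : ∀ r ∈ Set.Icc 0 T, c r = u r / m := by
    intro r hr
    simp only [hc_def, Function.comp_apply, min_eq_left hr.2, max_eq_right hr.1]
  -- key differential inequality: W' ≥ (u/m) W on [0,T]
  have hkey : ∀ r ∈ Set.Icc 0 T, c r * W r ≤ W' r := by
    intro r hr
    rw [hceq r hr]
    have hphir := (hphi r hr).le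
    have h1 := hineq r hr
    have : W' r - u r / m * W r = (u' r - ((u r) ^ 2 / m + m * K)) * phiKH K H r := by
      simp only [hW'_def, hW_def]
      field_simp
      ring
    nlinarith [mul_nonneg (sub_nonneg.mpr h1) hphir]
  -- integrating factor
  set C : ℝ → ℝ := fun r => ∫ t in (0:ℝ)..r, c t with hC_def
  have hC : ∀ r, HasDerivAt C (c r) r := by
    intro r
    exact intervalIntegral.integral_hasDerivAt_right
      (hc.intervalIntegrable 0 r)
      hc.stronglyMeasurable.stronglyMeasurableAtFilter
      hc.continuousAt
  set G : ℝ → ℝ := fun r => W r * Real.exp (-C r) with hG_def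
  have hG : ∀ r ∈ Set.Icc 0 T,
      HasDerivWithinAt G (W' r * Real.exp (-C r) + W r * (Real.exp (-C r) * -(c r)))
        (Set.Icc 0 T) r := by
    intro r hr
    exact (hW r hr).mul (((hC r).neg.exp).hasDerivWithinAt)
  have hGpos : ∀ r ∈ Set.Icc 0 T,
      0 ≤ W' r * Real.exp (-C r) + W r * (Real.exp (-C r) * -(c r)) := by
    intro r hr
    have h1 : W' r * Real.exp (-C r) + W r * (Real.exp (-C r) * -(c r))
        = (W' r - c r * W r) * Real.exp (-C r) := by ring
    rw [h1]
    exact mul_nonneg (sub_nonneg.mpr (hkey r hr)) (Real.exp_pos _).le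
  have hGcont : ContinuousOn G (Set.Icc 0 T) := fun r hr => (hG r hr).continuousWithinAt
  have hmono : MonotoneOn G (Set.Icc 0 T) := by
    apply monotoneOn_of_hasDerivWithinAt_nonneg (convex_Icc 0 T) hGcont
    · intro x hx
      rw [interior_Icc] at hx ⊢
      exact ((hG x (Set.Ioo_subset_Icc_self hx)).mono Set.Ioo_subset_Icc_self)
    · intro x hx
      rw [interior_Icc] at hx
      exact hGpos x (Set.Ioo_subset_Icc_self hx)
  -- conclude W ≥ 0 on [0,T]
  have hWnonneg : ∀ r ∈ Set.Icc 0 T, 0 ≤ W r := by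
    intro r hr
    have h0mem : (0:ℝ) ∈ Set.Icc 0 T := ⟨le_refl 0, hT.le⟩
    have hle : G 0 ≤ G r := hmono h0mem hr hr.1
    have hG0 : G 0 = W 0 := by
      simp [hG_def, hC_def, intervalIntegral.integral_same]
    have : 0 ≤ W r * Real.exp (-C r) := by
      rw [hG_def] at hle; exact le_trans hW0 (by rw [← hG0]; exact hle)
    nlinarith [this, Real.exp_pos (-C r)]
  -- final conversion
  intro r hr
  have hφ := hphi r hr
  rw [deriv_phiKH, div_le_iff₀ hφ]
  have := hWnonneg r hr
  simp only [hW_def] at this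
  nlinarith [this]
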